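/- Let φ₀, φ₁ : I → I be strictly increasing maps and fix x ∈ I. For s, t extended reals, if the itinerary σ(x|s) is lexicographically greater than σ(x|t), then s < t. In other words, σ(x|s) is a lexicographically non-increasing function of the threshold s. -/

import Mathlib

open scoped Classical

/-- The orbit of the map-with-a-gap with threshold `s ∈ [-∞,∞]` started at `x`:
index `t` is the paper's `x_{t+1}` (index `0` is the start `x₁ = x`), with
`x_{t+1} = φ₁ x_t` if `x_t ≥ s` and `x_{t+1} = φ₀ x_t` otherwise. -/
noncomputable def itinOrbit (φ0 φ1 : ℝ → ℝ) (s : EReal) (x : ℝ) : ℕ → ℝ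
  | 0 => x
  | n + 1 =>
      if s ≤ ((itinOrbit φ0 φ1 s x n : ℝ) : EReal) then φ1 (itinOrbit φ0 φ1 s x n)
      else φ0 (itinOrbit φ0 φ1 s x n)

/-- The itinerary `σ(x|s)`: its `t`-th letter (0-indexed) is `1` iff `x_{t+1} ≥ s`. -/
noncomputable def itin (φ0 φ1 : ℝ → ℝ) (s : EReal) (x : ℝ) (t : ℕ) : Bool :=
  if s ≤ ((itinOrbit φ0 φ1 s x t : ℝ) : EReal) then true else false

/-- Strict lexicographic order on infinite binary words (`false` = 0 ≺ `true` = 1). -/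
def LexLt (u v : ℕ → Bool) : Prop :=
  ∃ k, (∀ j < k, u j = v j) ∧ u k = false ∧ v k = true

/-!
Up to the first letter where `σ(x|s)` and `σ(x|t)` differ, both orbits start at `x` and apply
the same maps, so they coincide there. At that point `x_k` is `≥ s` (letter `1` of `σ(x|s)`)
and `< t` (letter `0` of `σ(x|t)`), whence `s < t`.
-/

section Itinerary

variable {φ0 φ1 : ℝ → ℝ} {s t : EReal} {x : ℝ} {n : ℕ}

theorem itin_eq_true_iff : itin φ0 φ1 s x n = true ↔ s ≤ (itinOrbit φ0 φ1 s x n : EReal) := by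
  simp [itin]

theorem itin_eq_false_iff : itin φ0 φ1 s x n = false ↔ (itinOrbit φ0 φ1 s x n : EReal) < s := by
  rw [← not_le, ← itin_eq_true_iff, Bool.not_eq_true]

theorem itinOrbit_succ :
    itinOrbit φ0 φ1 s x (n + 1) =
      bif itin φ0 φ1 s x n then φ1 (itinOrbit φ0 φ1 s x n) else φ0 (itinOrbit φ0 φ1 s x n) := by
  by_cases h : s ≤ (itinOrbit φ0 φ1 s x n : EReal) <;> simp [itinOrbit, itin, h]

theorem itinOrbit_eq_of_itin_eq (h : ∀ j < n, itin φ0 φ1 s x j = itin φ0 φ1 t x j) :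
    itinOrbit φ0 φ1 s x n = itinOrbit φ0 φ1 t x n := by
  induction n with
  | zero => rfl
  | succ n ih =>
    rw [itinOrbit_succ, itinOrbit_succ, ih fun j hj => h j (hj.trans n.lt_succ_self),
      h n n.lt_succ_self]

end Itinerary

theorem stmt_14_general (φ0 φ1 : ℝ → ℝ)
    (x : ℝ) (s t : EReal)
    (h : LexLt (itin φ0 φ1 t x) (itin φ0 φ1 s x)) :
    s < t := by
  obtain ⟨k, hagree, ht, hs⟩ := h
  have horbit : itinOrbit φ0 φ1 s x k = itinOrbit φ0 φ1 t x k :=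
    itinOrbit_eq_of_itin_eq fun j hj => (hagree j hj).symm
  calc s ≤ (itinOrbit φ0 φ1 s x k : EReal) := itin_eq_true_iff.mp hs
    _ = (itinOrbit φ0 φ1 t x k : EReal) := by rw [horbit]
    _ < t := itin_eq_false_iff.mp ht

/-- For strictly increasing maps `φ₀, φ₁ : I → I` and fixed `x ∈ I`,
if `σ(x|s)` is lexicographically greater than `σ(x|t)` then `s < t`; i.e. the itinerary
is a lexicographically non-increasing function of the threshold. -/
theorem stmt_14 (I : Set ℝ) (hI : I.OrdConnected) (φ0 φ1 : ℝ → ℝ)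
    (h0maps : Set.MapsTo φ0 I I) (h1maps : Set.MapsTo φ1 I I)
    (h0inc : ∀ x ∈ I, ∀ y ∈ I, x < y → φ0 x < φ0 y)
    (h1inc : ∀ x ∈ I, ∀ y ∈ I, x < y → φ1 x < φ1 y)
    (x : ℝ) (hx : x ∈ I) (s t : EReal)
    (h : LexLt (itin φ0 φ1 t x) (itin φ0 φ1 s x)) :
    s < t :=
  stmt_14_general φ0 φ1 x s t h
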